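/- In a finite graph, if B is a minimum-cardinality set of edges whose deletion (equivalently negation) balances a signed graph Σ on a connected graph G, then G − B is connected; equivalently, if deleting a balancing set disconnects G then that balancing set is not minimal. -/

import Mathlib

/-!
Switching the signs of all vertices on one side of a cut of `G - B` negates exactly the cut
edges, all of which lie in `B`, so it turns the balancing set `B` into the strictly smaller
balancing set `B` minus the cut. Hence a minimum balancing set contains no cut of `G`.
-/

/-- A signature is balanced when every closed walk has positive sign product. -/
def IsBalancedSig {V : Type*} (G : SimpleGraph V) (σ : Sym2 V → ℤˣ) : Prop :=
  ∀ (u : V) (w : G.Walk u u), (w.edges.map σ).prod = 1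

/-- Negate the signs of the edges in `B`. -/
def negateFin {V : Type*} [DecidableEq V] (σ : Sym2 V → ℤˣ)
    (B : Finset (Sym2 V)) : Sym2 V → ℤˣ :=
  fun e => if e ∈ B then -σ e else σ e

section Switching

variable {V : Type*} {G : SimpleGraph V}

/-- The factor `ς x * ς y` by which switching along `ς : V → ℤˣ` multiplies the sign of `xy`. -/
def switchSign (ς : V → ℤˣ) : Sym2 V → ℤˣ :=
  Sym2.lift ⟨fun x y => ς x * ς y, fun _ _ => mul_comm _ _⟩

@[simp]
lemma switchSign_mk (ς : V → ℤˣ) (x y : V) : switchSign ς s(x, y) = ς x * ς y := rfl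

lemma prod_map_switchSign_edges (ς : V → ℤˣ) {a b : V} (p : G.Walk a b) :
    (p.edges.map (switchSign ς)).prod = ς a * ς b := by
  induction p with
  | nil => simp [Int.units_mul_self]
  | @cons u v w _ p ih =>
    rw [SimpleGraph.Walk.edges_cons, List.map_cons, List.prod_cons, ih, switchSign_mk]
    calc ς u * ς v * (ς v * ς w) = ς u * (ς v * ς v) * ς w := by simp only [mul_assoc]
      _ = ς u * ς w := by rw [Int.units_mul_self, mul_one]

lemma exists_mem_edges_switchSign_eq_neg_one (ς : V → ℤˣ) {a b : V} (p : G.Walk a b)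
    (hab : ς a ≠ ς b) : ∃ e ∈ p.edges, switchSign ς e = -1 := by
  by_contra! hp
  have hprod : (p.edges.map (switchSign ς)).prod = 1 :=
    List.prod_eq_one fun s hs => by
      obtain ⟨e, he, rfl⟩ := List.mem_map.1 hs
      exact (Int.units_eq_one_or _).resolve_right (hp e he)
  rw [prod_map_switchSign_edges, mul_eq_one_iff_eq_inv, Int.units_inv_eq_self] at hprod
  exact hab hprod

lemma negateFin_eq_switchSign_mul [DecidableEq V] (σ : Sym2 V → ℤˣ) (ς : V → ℤˣ)
    {B B' : Finset (Sym2 V)} {e : Sym2 V} (he : e ∈ B' ↔ (e ∈ B ↔ switchSign ς e = 1)) :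
    negateFin σ B' e = switchSign ς e * negateFin σ B e := by
  rcases Int.units_eq_one_or (switchSign ς e) with h | h <;>
    by_cases heB : e ∈ B <;> simp_all [negateFin]

/-- Switching along `ς` carries a balancing set `B` to its symmetric difference with the
edges that `ς` makes negative. -/
lemma IsBalancedSig.negateFin_switch [DecidableEq V] {σ : Sym2 V → ℤˣ} {B : Finset (Sym2 V)}
    (hbal : IsBalancedSig G (negateFin σ B)) (ς : V → ℤˣ) {B' : Finset (Sym2 V)}
    (hB' : ∀ e ∈ G.edgeSet, e ∈ B' ↔ (e ∈ B ↔ switchSign ς e = 1)) :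
    IsBalancedSig G (negateFin σ B') := by
  intro u w
  have hedges : w.edges.map (negateFin σ B') =
      w.edges.map fun e => switchSign ς e * negateFin σ B e :=
    List.map_congr_left fun e he =>
      negateFin_eq_switchSign_mul σ ς (hB' e (w.edges_subset_edgeSet he))
  rw [hedges, List.prod_map_mul, prod_map_switchSign_edges, Int.units_mul_self, one_mul,
    hbal u w]

end Switching

section ComponentSign

variable {V : Type*}

open Classical in
/-- The vertex signing that is `-1` exactly on the component of `u` in `H`. -/
noncomputable def componentSign (H : SimpleGraph V) (u : V) : V → ℤˣ :=
  fun x => if H.Reachable u x then -1 else 1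

lemma switchSign_componentSign_of_adj {H : SimpleGraph V} (u : V) {x y : V} (h : H.Adj x y) :
    switchSign (componentSign H u) s(x, y) = 1 := by
  have hreach : H.Reachable u x ↔ H.Reachable u y :=
    ⟨fun hx => hx.trans h.reachable, fun hy => hy.trans h.symm.reachable⟩
  by_cases hx : H.Reachable u x <;> simp [componentSign, hx, ← hreach]

lemma mem_of_switchSign_componentSign_deleteEdges_eq_neg_one {G : SimpleGraph V}
    {s : Set (Sym2 V)} (u : V) {e : Sym2 V} (he : e ∈ G.edgeSet)
    (hneg : switchSign (componentSign (G.deleteEdges s) u) e = -1) : e ∈ s := by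
  induction e with
  | _ x y =>
    by_contra hs
    have hadj : (G.deleteEdges s).Adj x y := (G.deleteEdges_adj).2 ⟨he, hs⟩
    rw [switchSign_componentSign_of_adj u hadj] at hneg
    exact absurd hneg (by decide)

end ComponentSign

theorem minimal_balancing_set_leaves_connected_general {V : Type*}
    [DecidableEq V] (G : SimpleGraph V) (hG : G.Connected) (σ : Sym2 V → ℤˣ)
    (B : Finset (Sym2 V))
    (hbal : IsBalancedSig G (negateFin σ B))
    (hmin : ∀ B' : Finset (Sym2 V), ↑B' ⊆ G.edgeSet →
      IsBalancedSig G (negateFin σ B') → B.card ≤ B'.card) :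
    (G.deleteEdges ↑B).Connected := by
  classical
  refine (SimpleGraph.connected_iff _).2 ⟨fun u v => ?_, hG.nonempty⟩
  by_contra huv
  set ς := componentSign (G.deleteEdges ↑B) u
  have hcut : ∀ e ∈ G.edgeSet, switchSign ς e = -1 → e ∈ B := fun e he =>
    mem_of_switchSign_componentSign_deleteEdges_eq_neg_one u he
  set B' := B.filter fun e => e ∈ G.edgeSet ∧ switchSign ς e = 1
  have hbal' : IsBalancedSig G (negateFin σ B') := hbal.negateFin_switch ς fun e he => by
    rcases Int.units_eq_one_or (switchSign ς e) with h | h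
    · simp [B', he, h]
    · simp [B', h, hcut e he h]
  have hςuv : ς u ≠ ς v := by simp [ς, componentSign, huv]
  obtain ⟨e, hew, hneg⟩ := exists_mem_edges_switchSign_eq_neg_one ς (hG u v).some hςuv
  have hB'B : B' ⊂ B := Finset.filter_ssubset.2
    ⟨e, hcut e ((hG u v).some.edges_subset_edgeSet hew) hneg, by simp [hneg]⟩
  have hB'G : ↑B' ⊆ G.edgeSet := fun e he => (Finset.mem_filter.1 he).2.1
  exact (Finset.card_lt_card hB'B).not_ge (hmin B' hB'G hbal')

/-- Deleting a minimum-cardinality balancing set leaves a connected signed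
graph connected; equivalently, if deleting a balancing set disconnects the
graph then it is not minimal. -/
theorem minimal_balancing_set_leaves_connected {V : Type*} [Fintype V]
    [DecidableEq V] (G : SimpleGraph V) (hG : G.Connected) (σ : Sym2 V → ℤˣ)
    (B : Finset (Sym2 V)) (hBsub : ↑B ⊆ G.edgeSet)
    (hbal : IsBalancedSig G (negateFin σ B))
    (hmin : ∀ B' : Finset (Sym2 V), ↑B' ⊆ G.edgeSet →
      IsBalancedSig G (negateFin σ B') → B.card ≤ B'.card) :
    (G.deleteEdges ↑B).Connected :=
  minimal_balancing_set_leaves_connected_general G hG σ B hbal hmin
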